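/- Let u : ℝ² → ℝ² be smooth, ℤ²-periodic, and divergence-free (∂₁u₁ + ∂₂u₂ = 0), let h : ℝ² → ℝ be smooth and ℤ²-periodic, and let m ∈ ℝ² be a fixed unit vector. Set ω = ∂₁u₂ − ∂₂u₁ and q = ∑_{i,j} (∂_i u_j) m_i m_j. Then ∫_{[0,1]²} Δω · ∇^⊥·( ∇·( q·h·(m ⊗ m) ) ) dx = ∫_{[0,1]²} Δ²q · q · h dx. -/

import Mathlib

open Matrix MeasureTheory

/-- The partial derivative `∂ₖ f` of a function `f : ℝ² → ℝ`. -/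
noncomputable def pd (k : Fin 2) (f : (Fin 2 → ℝ) → ℝ) : (Fin 2 → ℝ) → ℝ :=
  fun x => fderiv ℝ f x (Pi.single k 1)

/-- The Laplacian `Δf = ∂₁²f + ∂₂²f` of a function `f : ℝ² → ℝ`. -/
noncomputable def lap (f : (Fin 2 → ℝ) → ℝ) : (Fin 2 → ℝ) → ℝ :=
  fun x => ∑ k, pd k (pd k f) x

/-- `∇^⊥·(∇·σ)` for a matrix field `σ : ℝ² → M₂(ℝ)`, where `(∇·σ)ᵢ = ∑ⱼ ∂ⱼσⱼᵢ`
and `∇^⊥·v = ∂₁v₂ − ∂₂v₁`. -/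
noncomputable def perpDivDiv (σ : (Fin 2 → ℝ) → Matrix (Fin 2) (Fin 2) ℝ) :
    (Fin 2 → ℝ) → ℝ :=
  fun x => pd 0 (fun y => ∑ j, pd j (fun z => σ z j 1) y) x
    - pd 1 (fun y => ∑ j, pd j (fun z => σ z j 0) y) x

/-- `q = (∇u) : m⊗m = ∑ᵢⱼ (∂ᵢuⱼ) mᵢ mⱼ`. -/
noncomputable def qf (u : (Fin 2 → ℝ) → Fin 2 → ℝ) (m : Fin 2 → ℝ) : (Fin 2 → ℝ) → ℝ :=
  fun x => ∑ i, ∑ j, pd i (fun y => u y j) x * m i * m j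

/-- periodicity -/
def Per (f : (Fin 2 → ℝ) → ℝ) : Prop :=
  ∀ (x : Fin 2 → ℝ) (n : Fin 2 → ℤ), f (x + fun k => (n k : ℝ)) = f x

lemma contDiff_pd {f : (Fin 2 → ℝ) → ℝ} (k : Fin 2) (hf : ContDiff ℝ (⊤ : ℕ∞) f) :
    ContDiff ℝ (⊤ : ℕ∞) (pd k f) :=
  (hf.fderiv_right (by simp)).clm_apply contDiff_const

lemma pd_add {f g : (Fin 2 → ℝ) → ℝ} (hf : ContDiff ℝ (⊤ : ℕ∞) f) (hg : ContDiff ℝ (⊤ : ℕ∞) g) (k : Fin 2) :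
    pd k (fun x => f x + g x) = fun x => pd k f x + pd k g x := by
  funext x
  simp only [pd, fderiv_fun_add (hf.differentiable (by simp) x) (hg.differentiable (by simp) x),
    ContinuousLinearMap.add_apply]

lemma pd_sub {f g : (Fin 2 → ℝ) → ℝ} (hf : ContDiff ℝ (⊤ : ℕ∞) f) (hg : ContDiff ℝ (⊤ : ℕ∞) g) (k : Fin 2) :
    pd k (fun x => f x - g x) = fun x => pd k f x - pd k g x := by
  funext x
  simp only [pd, fderiv_fun_sub (hf.differentiable (by simp) x) (hg.differentiable (by simp) x),
    ContinuousLinearMap.sub_apply]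

lemma pd_neg {f : (Fin 2 → ℝ) → ℝ} (k : Fin 2) :
    pd k (fun x => -(f x)) = fun x => -(pd k f x) := by
  funext x
  simp only [pd, fderiv_fun_neg, ContinuousLinearMap.neg_apply]

lemma pd_const_mul {f : (Fin 2 → ℝ) → ℝ} (hf : ContDiff ℝ (⊤ : ℕ∞) f) (c : ℝ) (k : Fin 2) :
    pd k (fun x => c * f x) = fun x => c * pd k f x := by
  funext x
  simp only [pd, fderiv_const_mul (hf.differentiable (by simp) x) c,
    ContinuousLinearMap.smul_apply, smul_eq_mul]

lemma pd_mul {f g : (Fin 2 → ℝ) → ℝ} (hf : ContDiff ℝ (⊤ : ℕ∞) f) (hg : ContDiff ℝ (⊤ : ℕ∞) g) (k : Fin 2) :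
    pd k (fun x => f x * g x) = fun x => pd k f x * g x + f x * pd k g x := by
  funext x
  simp only [pd, fderiv_fun_mul (hf.differentiable (by simp) x) (hg.differentiable (by simp) x),
    ContinuousLinearMap.add_apply, ContinuousLinearMap.smul_apply, smul_eq_mul]
  ring

lemma pd_comm {f : (Fin 2 → ℝ) → ℝ} (hf : ContDiff ℝ (⊤ : ℕ∞) f) (a b : Fin 2) :
    pd a (pd b f) = pd b (pd a f) := by
  funext x
  have hd2 : DifferentiableAt ℝ (fderiv ℝ f) x :=
    ((hf.fderiv_right (m := (⊤ : ℕ∞)) (by simp)).differentiable (by simp)) x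
  have key : ∀ v w : Fin 2 → ℝ,
      fderiv ℝ (fun y => fderiv ℝ f y v) x w = fderiv ℝ (fderiv ℝ f) x w v := by
    intro v w
    rw [fderiv_clm_apply hd2 (differentiableAt_const v)]
    simp
  have sym := second_derivative_symmetric (f' := fderiv ℝ f)
    (fun y => (hf.differentiable (by simp) y).hasFDerivAt) hd2.hasFDerivAt
    (Pi.single b 1) (Pi.single a 1)
  show fderiv ℝ (fun y => fderiv ℝ f y (Pi.single b 1)) x (Pi.single a 1)
    = fderiv ℝ (fun y => fderiv ℝ f y (Pi.single a 1)) x (Pi.single b 1)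
  rw [key, key, sym]

lemma pd_swap {f : (Fin 2 → ℝ) → ℝ} (hf : ContDiff ℝ (⊤ : ℕ∞) f) :
    pd 1 (pd 0 f) = pd 0 (pd 1 f) := pd_comm hf 1 0

lemma per_pd {f : (Fin 2 → ℝ) → ℝ} (hf : ContDiff ℝ (⊤ : ℕ∞) f) (hper : Per f) (k : Fin 2) :
    Per (pd k f) := by
  intro x n
  have hfe : (fun y => f (y + fun k => ((n k : ℤ) : ℝ))) = f := funext fun y => hper y n
  have h1 : HasFDerivAt (fun y => f (y + fun k => ((n k : ℤ) : ℝ)))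
      (fderiv ℝ f (x + fun k => ((n k : ℤ) : ℝ))) x := by
    have := ((hf.differentiable (by simp) _).hasFDerivAt).comp x
      ((hasFDerivAt_id x).add_const (fun k => ((n k : ℤ) : ℝ)))
    exact this
  rw [hfe] at h1
  simp only [pd, h1.fderiv]

lemma Per.add {f g} (hf : Per f) (hg : Per g) : Per fun x => f x + g x :=
  fun x n => by dsimp only; rw [hf x n, hg x n]
lemma Per.sub {f g} (hf : Per f) (hg : Per g) : Per fun x => f x - g x :=
  fun x n => by dsimp only; rw [hf x n, hg x n]
lemma Per.mul {f g} (hf : Per f) (hg : Per g) : Per fun x => f x * g x :=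
  fun x n => by dsimp only; rw [hf x n, hg x n]
lemma Per.const_mul {f} (hf : Per f) (c : ℝ) : Per fun x => c * f x :=
  fun x n => by dsimp only; rw [hf x n]

lemma integrableOn_Icc01 {f : (Fin 2 → ℝ) → ℝ} (hf : Continuous f) :
    IntegrableOn f (Set.Icc (0 : Fin 2 → ℝ) 1) :=
  hf.continuousOn.integrableOn_compact isCompact_Icc

lemma integral_pd_eq_zero {F : (Fin 2 → ℝ) → ℝ} (hF : ContDiff ℝ (⊤ : ℕ∞) F) (hper : Per F)
    (d : Fin 2) : ∫ x in Set.Icc (0 : Fin 2 → ℝ) 1, pd d F x = 0 := by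
  have hle : (0 : Fin 2 → ℝ) ≤ 1 := fun i => by norm_num
  have key : ∀ x : Fin 2 → ℝ,
      (∑ i : Fin 2, (if i = d then fderiv ℝ F x else 0) (Pi.single i (1 : ℝ))) = pd d F x := by
    intro x
    rw [Fin.sum_univ_two]
    unfold pd
    fin_cases d <;> simp
  have H := integral_divergence_of_hasFDerivAt_off_countable
    (n := 1) (0 : Fin 2 → ℝ) 1 hle
    (fun x i => if i = d then F x else 0)
    (fun x => ContinuousLinearMap.pi (fun i => if i = d then fderiv ℝ F x else 0))
    ∅ Set.countable_empty
    (by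
      apply continuousOn_pi.2
      intro i
      rcases eq_or_ne i d with rfl | hne
      · simpa using hF.continuous.continuousOn
      · simp only [if_neg hne]
        exact continuousOn_const)
    (by
      intro x _
      apply hasFDerivAt_pi.2
      intro i
      rcases eq_or_ne i d with rfl | hne
      · simpa using (hF.differentiable (by simp) x).hasFDerivAt
      · simp only [if_neg hne]
        exact hasFDerivAt_const 0 x)
    (by
      have : (fun x : Fin 2 → ℝ =>
          ∑ i, (ContinuousLinearMap.pi (fun i => if i = d then fderiv ℝ F x else 0))
            (Pi.single i 1) i) = pd d F := by
        funext x
        simp only [ContinuousLinearMap.pi_apply]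
        exact key x
      rw [this]
      exact integrableOn_Icc01 (contDiff_pd d hF).continuous)
  have hLHS : (fun x : Fin 2 → ℝ =>
      ∑ i, (ContinuousLinearMap.pi (fun i => if i = d then fderiv ℝ F x else 0))
        (Pi.single i 1) i) = pd d F := by
    funext x
    simp only [ContinuousLinearMap.pi_apply]
    exact key x
  rw [hLHS] at H
  rw [H]
  apply Finset.sum_eq_zero
  intro i _
  rcases eq_or_ne i d with rfl | hne
  · simp only [if_pos rfl]
    have hshift : ∀ y : Fin 1 → ℝ,
        (i.insertNth ((1 : Fin 2 → ℝ) i) y : Fin 2 → ℝ)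
          = i.insertNth ((0 : Fin 2 → ℝ) i) y + fun k => (((Pi.single i 1 : Fin 2 → ℤ)) k : ℝ) := by
      intro y
      funext k
      rcases eq_or_ne k i with rfl | hk
      · simp [Fin.insertNth_apply_same]
      · obtain ⟨j, rfl⟩ := Fin.exists_succAbove_eq hk
        simp [Fin.insertNth_apply_succAbove, Pi.single_eq_of_ne (Fin.succAbove_ne i j)]
    have : ∀ y : Fin 1 → ℝ, F (i.insertNth ((1 : Fin 2 → ℝ) i) y)
        = F (i.insertNth ((0 : Fin 2 → ℝ) i) y) := by
      intro y
      rw [hshift y, hper]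
    simp only [this, sub_self]
  · simp only [if_neg hne, integral_const, smul_zero, sub_self]

lemma ibp1 {A C : (Fin 2 → ℝ) → ℝ} (hA : ContDiff ℝ (⊤ : ℕ∞) A) (pA : Per A)
    (hC : ContDiff ℝ (⊤ : ℕ∞) C) (pC : Per C) (k : Fin 2) :
    ∫ x in Set.Icc (0 : Fin 2 → ℝ) 1, A x * pd k C x
      = - ∫ x in Set.Icc (0 : Fin 2 → ℝ) 1, pd k A x * C x := by
  have h0 := integral_pd_eq_zero (hA.mul hC) (pA.mul pC) k
  rw [pd_mul hA hC k] at h0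
  beta_reduce at h0
  rw [integral_add (f := fun x => pd k A x * C x) (g := fun x => A x * pd k C x) (integrableOn_Icc01 (((contDiff_pd k hA).continuous).mul hC.continuous))
    (integrableOn_Icc01 ((hA.continuous).mul (contDiff_pd k hC).continuous))] at h0
  linarith

lemma ibp2 {A B : (Fin 2 → ℝ) → ℝ} (hA : ContDiff ℝ (⊤ : ℕ∞) A) (pA : Per A)
    (hB : ContDiff ℝ (⊤ : ℕ∞) B) (pB : Per B) (a b : Fin 2) :
    ∫ x in Set.Icc (0 : Fin 2 → ℝ) 1, A x * pd a (pd b B) x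
      = ∫ x in Set.Icc (0 : Fin 2 → ℝ) 1, pd b (pd a A) x * B x := by
  have h1 := ibp1 hA pA (contDiff_pd b hB) (per_pd hB pB b) a
  have h2a : ∀ x, pd a A x * pd b B x = pd a A x * pd b B x := fun _ => rfl
  have h2 := ibp1 (contDiff_pd a hA) (per_pd hA pA a) hB pB b
  rw [h1]
  rw [show (fun x => pd a A x * pd b B x) = fun x => pd a A x * pd b B x from rfl] at h2
  rw [h2]
  simp

lemma sc_add {f g : (Fin 2 → ℝ) → ℝ} (hf : ContDiff ℝ (⊤ : ℕ∞) f) (hg : ContDiff ℝ (⊤ : ℕ∞) g) :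
    ContDiff ℝ (⊤ : ℕ∞) fun x => f x + g x := hf.add hg
lemma sc_sub {f g : (Fin 2 → ℝ) → ℝ} (hf : ContDiff ℝ (⊤ : ℕ∞) f) (hg : ContDiff ℝ (⊤ : ℕ∞) g) :
    ContDiff ℝ (⊤ : ℕ∞) fun x => f x - g x := hf.sub hg
lemma sc_cmul {f : (Fin 2 → ℝ) → ℝ} (c : ℝ) (hf : ContDiff ℝ (⊤ : ℕ∞) f) :
    ContDiff ℝ (⊤ : ℕ∞) fun x => c * f x := contDiff_const.mul hf
lemma sc_mul {f g : (Fin 2 → ℝ) → ℝ} (hf : ContDiff ℝ (⊤ : ℕ∞) f) (hg : ContDiff ℝ (⊤ : ℕ∞) g) :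
    ContDiff ℝ (⊤ : ℕ∞) fun x => f x * g x := hf.mul hg
lemma sc_neg {f : (Fin 2 → ℝ) → ℝ} (hf : ContDiff ℝ (⊤ : ℕ∞) f) :
    ContDiff ℝ (⊤ : ℕ∞) fun x => -(f x) := hf.neg

lemma lap_eq (g : (Fin 2 → ℝ) → ℝ) :
    lap g = fun x => pd 0 (pd 0 g) x + pd 1 (pd 1 g) x := by
  funext x; simp [lap, Fin.sum_univ_two]

lemma integral_combo4 {g1 g2 g3 g4 : (Fin 2 → ℝ) → ℝ} (c1 c2 c3 c4 : ℝ)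
    (h1 : Continuous g1) (h2 : Continuous g2) (h3 : Continuous g3) (h4 : Continuous g4) :
    ∫ x in Set.Icc (0 : Fin 2 → ℝ) 1, (c1 * g1 x + c2 * g2 x + c3 * g3 x + c4 * g4 x)
      = c1 * (∫ x in Set.Icc (0 : Fin 2 → ℝ) 1, g1 x)
      + c2 * (∫ x in Set.Icc (0 : Fin 2 → ℝ) 1, g2 x)
      + c3 * (∫ x in Set.Icc (0 : Fin 2 → ℝ) 1, g3 x)
      + c4 * (∫ x in Set.Icc (0 : Fin 2 → ℝ) 1, g4 x) := by
  have i1 := (integrableOn_Icc01 h1).const_mul c1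
  have i2 := (integrableOn_Icc01 h2).const_mul c2
  have i3 := (integrableOn_Icc01 h3).const_mul c3
  have i4 := (integrableOn_Icc01 h4).const_mul c4
  have i12 : Integrable (fun x => c1 * g1 x + c2 * g2 x)
      (volume.restrict (Set.Icc (0 : Fin 2 → ℝ) 1)) := i1.add i2
  have i123 : Integrable (fun x => c1 * g1 x + c2 * g2 x + c3 * g3 x)
      (volume.restrict (Set.Icc (0 : Fin 2 → ℝ) 1)) := i12.add i3
  rw [integral_add i123 i4, integral_add i12 i3, integral_add i1 i2,
    integral_const_mul, integral_const_mul, integral_const_mul, integral_const_mul]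

lemma master {u0 u1 h Q : (Fin 2 → ℝ) → ℝ} {m : Fin 2 → ℝ}
    (hu0 : ContDiff ℝ (⊤ : ℕ∞) u0) (hu1 : ContDiff ℝ (⊤ : ℕ∞) u1) (hh : ContDiff ℝ (⊤ : ℕ∞) h)
    (pu0 : Per u0) (pu1 : Per u1) (ph : Per h)
    (hdiv : ∀ x, pd 0 u0 x + pd 1 u1 x = 0)
    (hQ : Q = fun x => (m 0 * m 0) * pd 0 u0 x + (m 0 * m 1) * pd 0 u1 x
      + (m 1 * m 0) * pd 1 u0 x + (m 1 * m 1) * pd 1 u1 x) :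
    ∫ x in Set.Icc (0 : Fin 2 → ℝ) 1,
        lap (fun y => pd 0 u1 y - pd 1 u0 y) x *
          perpDivDiv (fun z => (Q z * h z) • vecMulVec m m) x
      = ∫ x in Set.Icc (0 : Fin 2 → ℝ) 1, lap (lap Q) x * Q x * h x := by
  have hQC : ContDiff ℝ (⊤ : ℕ∞) Q := by
    rw [hQ]
    exact sc_add (sc_add (sc_add (sc_cmul _ (contDiff_pd 0 hu0))
      (sc_cmul _ (contDiff_pd 0 hu1))) (sc_cmul _ (contDiff_pd 1 hu0)))
      (sc_cmul _ (contDiff_pd 1 hu1))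
  have pQ : Per Q := by
    rw [hQ]
    exact ((((per_pd hu0 pu0 0).const_mul _).add ((per_pd hu1 pu1 0).const_mul _)).add
      ((per_pd hu0 pu0 1).const_mul _)).add ((per_pd hu1 pu1 1).const_mul _)
  have hwC : ContDiff ℝ (⊤ : ℕ∞) (fun y => pd 0 u1 y - pd 1 u0 y) :=
    sc_sub (contDiff_pd 0 hu1) (contDiff_pd 1 hu0)
  have pw : Per (fun y => pd 0 u1 y - pd 1 u0 y) := (per_pd hu1 pu1 0).sub (per_pd hu0 pu0 1)
  have hGC : ContDiff ℝ (⊤ : ℕ∞) (lap (fun y => pd 0 u1 y - pd 1 u0 y)) := by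
    rw [lap_eq]
    exact sc_add (contDiff_pd 0 (contDiff_pd 0 hwC)) (contDiff_pd 1 (contDiff_pd 1 hwC))
  have pG : Per (lap (fun y => pd 0 u1 y - pd 1 u0 y)) := by
    rw [lap_eq]
    exact (per_pd (contDiff_pd 0 hwC) (per_pd hwC pw 0) 0).add
      (per_pd (contDiff_pd 1 hwC) (per_pd hwC pw 1) 1)
  have hPC : ContDiff ℝ (⊤ : ℕ∞) (fun x => Q x * h x) := sc_mul hQC hh
  have pP : Per (fun x => Q x * h x) := pQ.mul ph
  -- expansion of perpDivDiv
  have hσ : ∀ j i : Fin 2,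
      (fun z => ((Q z * h z) • vecMulVec m m : Matrix (Fin 2) (Fin 2) ℝ) j i)
        = fun z => (m j * m i) * (Q z * h z) := by
    intro j i
    funext z
    simp only [Matrix.smul_apply, vecMulVec_apply, smul_eq_mul]
    ring
  have hE : perpDivDiv (fun z => (Q z * h z) • vecMulVec m m) = fun x =>
      (m 0 * m 1) * pd 0 (pd 0 (fun x => Q x * h x)) x
      + (m 1 * m 1) * pd 0 (pd 1 (fun x => Q x * h x)) x
      + (-(m 0 * m 0)) * pd 1 (pd 0 (fun x => Q x * h x)) x
      + (-(m 1 * m 0)) * pd 1 (pd 1 (fun x => Q x * h x)) x := by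
    funext x
    show pd 0 (fun y => ∑ j, pd j
        (fun z => ((Q z * h z) • vecMulVec m m : Matrix (Fin 2) (Fin 2) ℝ) j 1) y) x
      - pd 1 (fun y => ∑ j, pd j
        (fun z => ((Q z * h z) • vecMulVec m m : Matrix (Fin 2) (Fin 2) ℝ) j 0) y) x = _
    have h1 : (fun y => ∑ j : Fin 2, pd j
        (fun z => ((Q z * h z) • vecMulVec m m : Matrix (Fin 2) (Fin 2) ℝ) j 1) y)
        = fun y => (m 0 * m 1) * pd 0 (fun x => Q x * h x) y
          + (m 1 * m 1) * pd 1 (fun x => Q x * h x) y := by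
      funext y
      rw [Fin.sum_univ_two, hσ 0 1, hσ 1 1, pd_const_mul hPC (m 0 * m 1) 0,
        pd_const_mul hPC (m 1 * m 1) 1]
    have h0 : (fun y => ∑ j : Fin 2, pd j
        (fun z => ((Q z * h z) • vecMulVec m m : Matrix (Fin 2) (Fin 2) ℝ) j 0) y)
        = fun y => (m 0 * m 0) * pd 0 (fun x => Q x * h x) y
          + (m 1 * m 0) * pd 1 (fun x => Q x * h x) y := by
      funext y
      rw [Fin.sum_univ_two, hσ 0 0, hσ 1 0, pd_const_mul hPC (m 0 * m 0) 0,
        pd_const_mul hPC (m 1 * m 0) 1]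
    rw [h1, h0]
    simp (config := { maxDischargeDepth := 20 }) only
      [pd_add, pd_const_mul, contDiff_pd, sc_add, sc_cmul, hPC]
    ring
  -- pointwise identity
  have key : ∀ x, (m 0 * m 1) * pd 0 (pd 0 (lap (fun y => pd 0 u1 y - pd 1 u0 y))) x
      + (m 1 * m 1) * pd 1 (pd 0 (lap (fun y => pd 0 u1 y - pd 1 u0 y))) x
      + (-(m 0 * m 0)) * pd 0 (pd 1 (lap (fun y => pd 0 u1 y - pd 1 u0 y))) x
      + (-(m 1 * m 0)) * pd 1 (pd 1 (lap (fun y => pd 0 u1 y - pd 1 u0 y))) x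
      = lap (lap Q) x := by
    intro x
    have t1 : pd 0 (pd 1 u0) = pd 1 (pd 0 u0) := pd_comm hu0 0 1
    have t2 : pd 0 (pd 1 (pd 1 u0)) = pd 1 (pd 0 (pd 1 u0)) := pd_comm (contDiff_pd 1 hu0) 0 1
    have t3 : pd 0 (pd 1 (pd 1 (pd 1 u0))) = pd 1 (pd 0 (pd 1 (pd 1 u0))) :=
      pd_comm (contDiff_pd 1 (contDiff_pd 1 hu0)) 0 1
    have t4 : pd 0 (pd 1 (pd 1 (pd 1 (pd 1 u0)))) = pd 1 (pd 0 (pd 1 (pd 1 (pd 1 u0)))) :=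
      pd_comm (contDiff_pd 1 (contDiff_pd 1 (contDiff_pd 1 hu0))) 0 1
    have hdiv' : pd 0 u0 = fun x => -(pd 1 u1 x) := funext fun x => by
      have := hdiv x; linarith
    rw [hQ]
    simp only [lap_eq]
    simp (config := { maxDischargeDepth := 40 }) only
      [pd_add, pd_sub, pd_const_mul, contDiff_pd, sc_add, sc_sub, sc_cmul, hu0, hu1]
    simp only [t1, t2, t3, t4]
    simp only [hdiv', pd_neg]
    simp (config := { maxDischargeDepth := 40 }) only [pd_swap, contDiff_pd, hu0, hu1]
    ring
  -- integral manipulations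
  simp only [hE]
  have step1 : (fun x => lap (fun y => pd 0 u1 y - pd 1 u0 y) x *
      ((m 0 * m 1) * pd 0 (pd 0 (fun x => Q x * h x)) x
      + (m 1 * m 1) * pd 0 (pd 1 (fun x => Q x * h x)) x
      + (-(m 0 * m 0)) * pd 1 (pd 0 (fun x => Q x * h x)) x
      + (-(m 1 * m 0)) * pd 1 (pd 1 (fun x => Q x * h x)) x))
      = fun x =>
        (m 0 * m 1) * (lap (fun y => pd 0 u1 y - pd 1 u0 y) x
          * pd 0 (pd 0 (fun x => Q x * h x)) x)
      + (m 1 * m 1) * (lap (fun y => pd 0 u1 y - pd 1 u0 y) x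
          * pd 0 (pd 1 (fun x => Q x * h x)) x)
      + (-(m 0 * m 0)) * (lap (fun y => pd 0 u1 y - pd 1 u0 y) x
          * pd 1 (pd 0 (fun x => Q x * h x)) x)
      + (-(m 1 * m 0)) * (lap (fun y => pd 0 u1 y - pd 1 u0 y) x
          * pd 1 (pd 1 (fun x => Q x * h x)) x) := by
    funext x; ring
  rw [step1]
  have cG : Continuous (lap (fun y => pd 0 u1 y - pd 1 u0 y)) := hGC.continuous
  have c1 : Continuous (fun x => lap (fun y => pd 0 u1 y - pd 1 u0 y) x
      * pd 0 (pd 0 (fun x => Q x * h x)) x) :=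
    cG.mul (contDiff_pd 0 (contDiff_pd 0 hPC)).continuous
  have c2 : Continuous (fun x => lap (fun y => pd 0 u1 y - pd 1 u0 y) x
      * pd 0 (pd 1 (fun x => Q x * h x)) x) :=
    cG.mul (contDiff_pd 0 (contDiff_pd 1 hPC)).continuous
  have c3 : Continuous (fun x => lap (fun y => pd 0 u1 y - pd 1 u0 y) x
      * pd 1 (pd 0 (fun x => Q x * h x)) x) :=
    cG.mul (contDiff_pd 1 (contDiff_pd 0 hPC)).continuous
  have c4 : Continuous (fun x => lap (fun y => pd 0 u1 y - pd 1 u0 y) x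
      * pd 1 (pd 1 (fun x => Q x * h x)) x) :=
    cG.mul (contDiff_pd 1 (contDiff_pd 1 hPC)).continuous
  rw [integral_combo4 _ _ _ _ c1 c2 c3 c4]
  simp only [ibp2 hGC pG hPC pP 0 0, ibp2 hGC pG hPC pP 0 1,
    ibp2 hGC pG hPC pP 1 0, ibp2 hGC pG hPC pP 1 1]
  have d1 : Continuous (fun x => pd 0 (pd 0 (lap (fun y => pd 0 u1 y - pd 1 u0 y))) x
      * (Q x * h x)) :=
    (contDiff_pd 0 (contDiff_pd 0 hGC)).continuous.mul hPC.continuous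
  have d2 : Continuous (fun x => pd 1 (pd 0 (lap (fun y => pd 0 u1 y - pd 1 u0 y))) x
      * (Q x * h x)) :=
    (contDiff_pd 1 (contDiff_pd 0 hGC)).continuous.mul hPC.continuous
  have d3 : Continuous (fun x => pd 0 (pd 1 (lap (fun y => pd 0 u1 y - pd 1 u0 y))) x
      * (Q x * h x)) :=
    (contDiff_pd 0 (contDiff_pd 1 hGC)).continuous.mul hPC.continuous
  have d4 : Continuous (fun x => pd 1 (pd 1 (lap (fun y => pd 0 u1 y - pd 1 u0 y))) x
      * (Q x * h x)) :=
    (contDiff_pd 1 (contDiff_pd 1 hGC)).continuous.mul hPC.continuous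
  rw [← integral_combo4 _ _ _ _ d1 d2 d3 d4]
  have final : (fun x =>
        (m 0 * m 1) * (pd 0 (pd 0 (lap (fun y => pd 0 u1 y - pd 1 u0 y))) x * (Q x * h x))
      + (m 1 * m 1) * (pd 1 (pd 0 (lap (fun y => pd 0 u1 y - pd 1 u0 y))) x * (Q x * h x))
      + (-(m 0 * m 0)) * (pd 0 (pd 1 (lap (fun y => pd 0 u1 y - pd 1 u0 y))) x * (Q x * h x))
      + (-(m 1 * m 0)) * (pd 1 (pd 1 (lap (fun y => pd 0 u1 y - pd 1 u0 y))) x * (Q x * h x)))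
      = fun x => lap (lap Q) x * Q x * h x := by
    funext x
    have hk := key x
    linear_combination (Q x * h x) * hk
  rw [final]

/-- Cancellation structure (C2-Doi2D): for a smooth ℤ²-periodic divergence-free `u : ℝ² → ℝ²`,
a smooth ℤ²-periodic `h : ℝ² → ℝ`, and a unit vector `m ∈ ℝ²`, with
`ω = ∂₁u₂ − ∂₂u₁` and `q = ∑ᵢⱼ (∂ᵢuⱼ)mᵢmⱼ`:
`∫_{[0,1]²} Δω·∇^⊥·(∇·(q·h·(m⊗m))) = ∫_{[0,1]²} Δ²q·q·h`. -/
theorem viscous_stress_cancellation_H2 (u : (Fin 2 → ℝ) → Fin 2 → ℝ)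
    (h : (Fin 2 → ℝ) → ℝ) (m : Fin 2 → ℝ)
    (hu : ∀ j, ContDiff ℝ (⊤ : ℕ∞) fun x => u x j)
    (huper : ∀ (x : Fin 2 → ℝ) (n : Fin 2 → ℤ) (j : Fin 2),
      u (x + fun k => (n k : ℝ)) j = u x j)
    (hdiv : ∀ x, pd 0 (fun y => u y 0) x + pd 1 (fun y => u y 1) x = 0)
    (hh : ContDiff ℝ (⊤ : ℕ∞) h)
    (hhper : ∀ (x : Fin 2 → ℝ) (n : Fin 2 → ℤ), h (x + fun k => (n k : ℝ)) = h x)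
    (hm : ∑ i, m i ^ 2 = 1) :
    ∫ x in Set.Icc (0 : Fin 2 → ℝ) 1,
        lap (fun y => pd 0 (fun w => u w 1) y - pd 1 (fun w => u w 0) y) x *
          perpDivDiv (fun z => (qf u m z * h z) • vecMulVec m m) x
      = ∫ x in Set.Icc (0 : Fin 2 → ℝ) 1, lap (lap (qf u m)) x * qf u m x * h x := by
  have hQ : qf u m = fun x => (m 0 * m 0) * pd 0 (fun y => u y 0) x
      + (m 0 * m 1) * pd 0 (fun y => u y 1) x
      + (m 1 * m 0) * pd 1 (fun y => u y 0) x
      + (m 1 * m 1) * pd 1 (fun y => u y 1) x := by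
    funext x
    simp only [qf, Fin.sum_univ_two]
    ring
  exact master (hu 0) (hu 1) hh (fun x n => huper x n 0) (fun x n => huper x n 1)
    hhper hdiv hQ
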